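/- Let H, I : ℝ⁴ → ℝ be continuously differentiable, let γ : ℝ → ℝ⁴ be a differentiable solution of Hamilton's equations for H along which I is constant (I is a first integral on this trajectory), and let ℓ₁, ℓ₂ : ℝ⁴ → ℝ be linear functionals with constants e₁, e₂. Suppose a point x = γ(t₀) is an accumulation point of the section γ(ℝ) ∩ { y : ℓ₁(y) = e₁, ℓ₂(y) = e₂ }, i.e. there is a sequence of points of this intersection, all different from x, converging to x. Then the covectors dH(x), dI(x), ℓ₁, ℓ₂ are linearly dependent. Consequently, if the intersection of a trajectory with a 2-plane contains a curve (hence accumulation points) at which ℓ₁, ℓ₂ are independent of dH, the system admits no second first integral whose differential at those points is independent of dH, ℓ₁, ℓ₂. -/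

import Mathlib

/-!
Both `H` (by the skew-symmetry of Hamilton's equations) and `I` are constant along the trajectory,
and `ℓ₁`, `ℓ₂` are constant on the plane, so all four functions are constant on the section. Since
`x` is an accumulation point of the section, its tangent cone at `x` contains a nonzero vector `w`
(by compactness of the unit sphere), and the differential at `x` of a function constant on the
section vanishes on this cone. Four covectors on `ℝ⁴` with a common nonzero kernel vector `w`
cannot be linearly independent.
-/

open Filter Set Topology Module

theorem accPt_principal_of_tendsto {X : Type*} [TopologicalSpace X] {s : Set X} {x : X}
    {u : ℕ → X} (hu : Tendsto u atTop (𝓝 x)) (hne : ∀ k, u k ≠ x) (hs : ∀ k, u k ∈ s) :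
    AccPt x (𝓟 s) :=
  accPt_principal_iff_nhdsWithin.2 <|
    (tendsto_nhdsWithin_iff (s := s \ {x}).2 ⟨hu, .of_forall fun k => ⟨hs k, hne k⟩⟩).neBot

theorem HasFDerivWithinAt.apply_eq_zero_of_mem_tangentConeAt {𝕜 E F : Type*}
    [NontriviallyNormedField 𝕜] [NormedAddCommGroup E] [NormedSpace 𝕜 E]
    [NormedAddCommGroup F] [NormedSpace 𝕜 F] {f : E → F} {f' : E →L[𝕜] F} {s : Set E} {x y : E}
    (hf : HasFDerivWithinAt f f' s x) (hconst : ∀ z ∈ s, f z = f x)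
    (hy : y ∈ tangentConeAt 𝕜 s x) : f' y = 0 := by
  have himage : f '' s ⊆ {f x} := image_subset_iff.2 hconst
  have hisolated : ¬AccPt (f x) (𝓟 {f x}) := fun h => by
    obtain ⟨z, ⟨-, rfl⟩, hz⟩ := accPt_iff_nhds.1 h _ univ_mem
    exact hz rfl
  exact tangentConeAt_subset_zero hisolated
    (tangentConeAt_mono himage (hf.mapsTo_tangent_cone hy))

theorem Module.Dual.not_linearIndependent_of_apply_eq_zero {K V ι : Type*} [Field K]
    [AddCommGroup V] [Module K V] [FiniteDimensional K V] [Fintype ι]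
    (hcard : Fintype.card ι = finrank K V) {f : ι → Dual K V} {w : V} (hw : w ≠ 0)
    (hf : ∀ i, f i w = 0) : ¬LinearIndependent K f := by
  intro hli
  have hspan := hli.span_eq_top_of_card_eq_finrank' (hcard.trans Subspace.dual_finrank_eq.symm)
  have hker : Submodule.span K (range f) ≤ LinearMap.ker (Dual.eval K V w) :=
    Submodule.span_le.2 <| range_subset_iff.2 hf
  rw [hspan, top_le_iff, LinearMap.ker_eq_top] at hker
  exact hw ((forall_dual_apply_eq_zero_iff K w).1 fun φ => LinearMap.congr_fun hker φ)

theorem ContinuousLinearMap.not_linearIndependent_of_apply_eq_zero {𝕜 E ι : Type*}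
    [NontriviallyNormedField 𝕜] [NormedAddCommGroup E] [NormedSpace 𝕜 E]
    [FiniteDimensional 𝕜 E] [Fintype ι]
    (hcard : Fintype.card ι = finrank 𝕜 E) {f : ι → E →L[𝕜] 𝕜} {w : E} (hw : w ≠ 0)
    (hf : ∀ i, f i w = 0) : ¬LinearIndependent 𝕜 f := fun hli =>
  Module.Dual.not_linearIndependent_of_apply_eq_zero hcard hw hf <|
    hli.map' (coeLM 𝕜) (LinearMap.ker_eq_bot.2 coe_injective)

/-- `J ∇H` in the coordinates `(q₁, p₁, q₂, p₂)` for `L = dH(y)`: the right-hand side of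
Hamilton's equations. -/
noncomputable def symplecticGradient (L : (Fin 4 → ℝ) →L[ℝ] ℝ) : Fin 4 → ℝ :=
  ![L (Pi.single 1 1), -L (Pi.single 0 1), L (Pi.single 3 1), -L (Pi.single 2 1)]

theorem apply_symplecticGradient_self (L : (Fin 4 → ℝ) →L[ℝ] ℝ) :
    L (symplecticGradient L) = 0 := by
  have hdecomp : symplecticGradient L = ∑ i, symplecticGradient L i • Pi.single i 1 := by
    ext i; fin_cases i <;> simp [Fin.sum_univ_four]
  rw [hdecomp]
  simp only [symplecticGradient, Fin.sum_univ_four, Matrix.cons_val_zero, Matrix.cons_val_one,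
    Matrix.cons_val, neg_smul, map_add, map_smul, map_neg, smul_eq_mul]
  ring

theorem hasDerivAt_symplecticGradient_of_hamilton {H : (Fin 4 → ℝ) → ℝ} {γ : ℝ → Fin 4 → ℝ}
    {t : ℝ}
    (hq1 : HasDerivAt (fun s => γ s 0) (fderiv ℝ H (γ t) (Pi.single 1 1)) t)
    (hp1 : HasDerivAt (fun s => γ s 1) (-(fderiv ℝ H (γ t) (Pi.single 0 1))) t)
    (hq2 : HasDerivAt (fun s => γ s 2) (fderiv ℝ H (γ t) (Pi.single 3 1)) t)
    (hp2 : HasDerivAt (fun s => γ s 3) (-(fderiv ℝ H (γ t) (Pi.single 2 1))) t) :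
    HasDerivAt γ (symplecticGradient (fderiv ℝ H (γ t))) t := by
  refine hasDerivAt_pi.2 fun i => ?_
  fin_cases i
  exacts [hq1, hp1, hq2, hp2]

theorem apply_eq_of_hasDerivAt_symplecticGradient {H : (Fin 4 → ℝ) → ℝ} (hH : Differentiable ℝ H)
    {γ : ℝ → Fin 4 → ℝ} (hγ : ∀ t, HasDerivAt γ (symplecticGradient (fderiv ℝ H (γ t))) t)
    (s t : ℝ) : H (γ s) = H (γ t) := by
  have hderiv t : HasDerivAt (H ∘ γ) 0 t := by
    simpa only [apply_symplecticGradient_self] using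
      (hH (γ t)).hasFDerivAt.comp_hasDerivAt t (hγ t)
  exact is_const_of_deriv_eq_zero (fun t => (hderiv t).differentiableAt)
    (fun t => (hderiv t).deriv) s t

/-- Phase space `ℝ⁴` with canonical coordinates `(q₁, p₁, q₂, p₂)` indexed by
`0, 1, 2, 3`. If a point `x = γ t₀` of a trajectory `γ` of Hamilton's equations
for `H`, along which the first integral `I` is constant, is an accumulation
point of the section of the trajectory by the 2-plane
`{y : ℓ₁ y = e₁, ℓ₂ y = e₂}`, then the covectors `dH(x)`, `dI(x)`, `ℓ₁`, `ℓ₂`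
are linearly dependent. -/
theorem accumulation_point_of_section_implies_dependence
    (H I : (Fin 4 → ℝ) → ℝ) (hH : ContDiff ℝ 1 H) (hI : ContDiff ℝ 1 I)
    (γ : ℝ → (Fin 4 → ℝ))
    -- Hamilton's equations: q₁' = ∂H/∂p₁, p₁' = −∂H/∂q₁, q₂' = ∂H/∂p₂, p₂' = −∂H/∂q₂
    (hq1 : ∀ t : ℝ, HasDerivAt (fun s => γ s 0)
        (fderiv ℝ H (γ t) (Pi.single 1 1)) t)
    (hp1 : ∀ t : ℝ, HasDerivAt (fun s => γ s 1)
        (-(fderiv ℝ H (γ t) (Pi.single 0 1))) t)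
    (hq2 : ∀ t : ℝ, HasDerivAt (fun s => γ s 2)
        (fderiv ℝ H (γ t) (Pi.single 3 1)) t)
    (hp2 : ∀ t : ℝ, HasDerivAt (fun s => γ s 3)
        (-(fderiv ℝ H (γ t) (Pi.single 2 1))) t)
    -- I is a first integral on this trajectory
    (hIconst : ∀ t : ℝ, I (γ t) = I (γ 0))
    (ℓ₁ ℓ₂ : (Fin 4 → ℝ) →L[ℝ] ℝ) (e₁ e₂ : ℝ)
    (t₀ : ℝ) (x : Fin 4 → ℝ) (hx : x = γ t₀)
    -- x is an accumulation point of the section of the trajectory by the plane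
    (u : ℕ → (Fin 4 → ℝ))
    (hu_mem : ∀ k : ℕ, (∃ s : ℝ, γ s = u k) ∧ ℓ₁ (u k) = e₁ ∧ ℓ₂ (u k) = e₂)
    (hu_ne : ∀ k : ℕ, u k ≠ x)
    (hu_lim : Filter.Tendsto u Filter.atTop (nhds x)) :
    ¬ LinearIndependent ℝ ![fderiv ℝ H x, fderiv ℝ I x, ℓ₁, ℓ₂] := by
  have hH_conserved := apply_eq_of_hasDerivAt_symplecticGradient (hH.differentiable one_ne_zero)
    fun t => hasDerivAt_symplecticGradient_of_hamilton (hq1 t) (hp1 t) (hq2 t) (hp2 t)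
  have hx_plane : ℓ₁ x = e₁ ∧ ℓ₂ x = e₂ :=
    ((isClosed_eq ℓ₁.continuous continuous_const).inter
      (isClosed_eq ℓ₂.continuous continuous_const)).mem_of_tendsto hu_lim
      (.of_forall fun k => (hu_mem k).2)
  set S := range γ ∩ {y | ℓ₁ y = e₁ ∧ ℓ₂ y = e₂}
  obtain ⟨w, hwS, hw0⟩ := tangentConeAt_nonempty_of_properSpace (𝕜 := ℝ)
    (accPt_principal_of_tendsto hu_lim hu_ne (s := S) fun k => hu_mem k)
  have hker {F : (Fin 4 → ℝ) → ℝ} {F' : (Fin 4 → ℝ) →L[ℝ] ℝ} (hF : HasFDerivAt F F' x)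
      (hconst : ∀ y ∈ S, F y = F x) : F' w = 0 :=
    hF.hasFDerivWithinAt.apply_eq_zero_of_mem_tangentConeAt hconst hwS
  refine ContinuousLinearMap.not_linearIndependent_of_apply_eq_zero (by simp) hw0 fun i => ?_
  fin_cases i
  · refine hker ((hH.differentiable one_ne_zero x).hasFDerivAt) ?_
    rintro _ ⟨⟨s, rfl⟩, -⟩
    rw [hx, hH_conserved s t₀]
  · refine hker ((hI.differentiable one_ne_zero x).hasFDerivAt) ?_
    rintro _ ⟨⟨s, rfl⟩, -⟩
    rw [hx, hIconst s, hIconst t₀]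
  · exact hker ℓ₁.hasFDerivAt fun y hy => hy.2.1.trans hx_plane.1.symm
  · exact hker ℓ₂.hasFDerivAt fun y hy => hy.2.2.trans hx_plane.2.symm
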